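/- arXiv:1006.0222 — 2 statements merged into one kernel-verified Lean document; each statement's English description precedes it below -/
import Mathlib

section
/- Let B_j ⊆ ℂ be nonempty compact sets and suppose for each j there is a well-defined continuous branch g_j : B_{j+1} → B_j with E_λ(g_j(w)) = w. Then there exists z_0 ∈ B_0 with E_λ^n(z_0) ∈ B_n for all n ≥ 0. -/
open Set

theorem pullback_orbit_exists (f : ℂ → ℂ) (hf : Continuous f)
    (B : ℕ → Set ℂ) (hne : ∀ n, (B n).Nonempty) (hcpt : ∀ n, IsCompact (B n))
    (g : ℕ → ℂ → ℂ) (hg : ∀ n, ContinuousOn (g n) (B (n + 1)))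
    (hmaps : ∀ n, MapsTo (g n) (B (n + 1)) (B n))
    (hsec : ∀ n, ∀ w ∈ B (n + 1), f (g n w) = w) :
    ∃ z₀ ∈ B 0, ∀ n : ℕ, f^[n] z₀ ∈ B n := by
  -- pullback points exist
  have key : ∀ n, ∀ z ∈ B n, ∃ x, f^[n] x = z ∧ ∀ k ≤ n, f^[k] x ∈ B k := by
    intro n
    induction n with
    | zero =>
      intro z hz
      exact ⟨z, rfl, fun k hk => by simpa [Nat.le_zero.mp hk] using hz⟩
    | succ n ih =>
      intro z hz
      obtain ⟨x, hx1, hx2⟩ := ih (g n z) (hmaps n hz)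
      refine ⟨x, ?_, ?_⟩
      · rw [Function.iterate_succ_apply', hx1, hsec n z hz]
      · intro k hk
        rcases Nat.lt_succ_iff_lt_or_eq.mp (Nat.lt_succ_of_le hk) with h | h
        · exact hx2 k (Nat.lt_succ_iff.mp h)
        · subst h
          rw [Function.iterate_succ_apply', hx1, hsec n z hz]; exact hz
  set K : ℕ → Set ℂ := fun n => {z | ∀ k ≤ n, f^[k] z ∈ B k} with hK
  have hKclosed : ∀ n, IsClosed (K n) := by
    intro n
    have : K n = ⋂ k ∈ Finset.range (n + 1), f^[k] ⁻¹' (B k) := by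
      ext z
      simp [hK, Nat.lt_succ_iff]
    rw [this]
    exact isClosed_biInter fun k _ =>
      ((hcpt k).isClosed).preimage (hf.iterate k)
  have hKsub : ∀ n, K n ⊆ B 0 := fun n z hz => by simpa using hz 0 (Nat.zero_le n)
  have hKne : ∀ n, (K n).Nonempty := by
    intro n
    obtain ⟨z, hz⟩ := hne n
    obtain ⟨x, _, hx2⟩ := key n z hz
    exact ⟨x, hx2⟩
  have hKmono : ∀ n, K (n + 1) ⊆ K n := fun n z hz k hk => hz k (hk.trans (Nat.le_succ n))
  have hKcpt : ∀ n, IsCompact (K n) := fun n =>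
    (hcpt 0).of_isClosed_subset (hKclosed n) (hKsub n)
  obtain ⟨z₀, hz₀⟩ := IsCompact.nonempty_iInter_of_sequence_nonempty_isCompact_isClosed
    K hKmono hKne (hKcpt 0) hKclosed
  simp only [mem_iInter] at hz₀
  exact ⟨z₀, hKsub 0 (hz₀ 0), fun n => hz₀ n n le_rfl⟩
end

section
/- In ℂ, if V is a connected component of the complement of a closed connected set and V is open, then ∂V is connected. -/
open Set Complex Manifold Filter Topology intervalIntegral



/-- A C¹ nonvanishing function on ℂ has a continuous logarithm. -/
lemma smooth_log_exists (h : ℂ → ℂ) (hd : ContDiff ℝ 1 h) (hne : ∀ z, h z ≠ 0) :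
    ∃ g : ℂ → ℂ, Continuous g ∧ ∀ z, Complex.exp (g z) = h z := by
  classical
  set F : ℂ → ℝ → ℂ := fun z t => (fderiv ℝ h (t • z)) z / h (t • z) with hF
  have hdiff : Differentiable ℝ h := hd.differentiable one_ne_zero
  have hfc : Continuous (fderiv ℝ h) := hd.continuous_fderiv one_ne_zero
  have hFc : Continuous (fun p : ℝ × ℂ => F p.2 p.1) := by
    apply Continuous.div
    · exact (isBoundedBilinearMap_apply.continuous).comp
        ((hfc.comp ((continuous_fst.smul continuous_snd))).prodMk continuous_snd)
    · exact hd.continuous.comp (continuous_fst.smul continuous_snd)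
    · exact fun p => hne _
  refine ⟨fun z => Complex.log (h 0) + ∫ t in (0:ℝ)..1, F z t, ?_, ?_⟩
  · apply continuous_const.add
    rw [continuous_iff_continuousAt]
    intro z₀
    obtain ⟨M, hM⟩ : ∃ M : ℝ, ∀ p ∈ (Icc (0:ℝ) 1) ×ˢ Metric.closedBall z₀ 1,
        ‖F p.2 p.1‖ ≤ M := by
      have hcomp : IsCompact ((Icc (0:ℝ) 1) ×ˢ Metric.closedBall z₀ 1) :=
        isCompact_Icc.prod (isCompact_closedBall _ _)
      obtain ⟨M, hM⟩ := hcomp.exists_bound_of_continuousOn hFc.continuousOn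
      exact ⟨M, hM⟩
    apply intervalIntegral.continuousAt_of_dominated_interval (bound := fun _ => M)
    · filter_upwards with z
      exact ((hFc.comp (continuous_id.prodMk continuous_const)).aestronglyMeasurable).restrict
    · filter_upwards [Metric.closedBall_mem_nhds z₀ one_pos] with z hz
      filter_upwards with t ht
      rw [Set.uIoc_of_le zero_le_one] at ht
      exact hM (t, z) ⟨⟨le_of_lt ht.1, ht.2⟩, hz⟩
    · exact intervalIntegrable_const
    · filter_upwards with t ht
      exact (hFc.comp (continuous_const.prodMk continuous_id)).continuousAt
  · intro z
    set ψ : ℝ → ℂ := fun t => F z t with hψ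
    have hψc : Continuous ψ := hFc.comp (continuous_id.prodMk continuous_const)
    set G : ℝ → ℂ := fun t => Complex.log (h 0) + ∫ s in (0:ℝ)..t, ψ s with hG
    have hGd : ∀ t : ℝ, HasDerivAt G (ψ t) t := by
      intro t
      exact ((intervalIntegral.integral_hasDerivAt_right
        (hψc.intervalIntegrable _ _) (hψc.stronglyMeasurableAtFilter _ _)
        hψc.continuousAt)).const_add _
    have hhd : ∀ t : ℝ, HasDerivAt (fun s : ℝ => h (s • z)) ((fderiv ℝ h (t • z)) z) t := by
      intro t
      have h1 : HasDerivAt (fun s : ℝ => s • z) z t := by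
        simpa using (hasDerivAt_id t).smul_const z
      exact (hdiff.differentiableAt.hasFDerivAt.comp_hasDerivAt t h1)
    set φ : ℝ → ℂ := fun t => Complex.exp (-(G t)) * h (t • z) with hφ
    have hφd : ∀ t : ℝ, HasDerivAt φ 0 t := by
      intro t
      have := (((hGd t).neg.cexp).mul (hhd t))
      convert this using 1
      · rfl
      case e'_8 => rfl
      simp only [Pi.neg_apply]
      have key : ψ t * h (t • z) = (fderiv ℝ h (t • z)) z := div_mul_cancel₀ _ (hne _)
      rw [← key]; ring
    have hconst : φ 1 = φ 0 := by
      have : ∀ t : ℝ, deriv φ t = 0 := fun t => (hφd t).deriv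
      exact is_const_of_deriv_eq_zero (fun t => (hφd t).differentiableAt) this 1 0
    have h0 : φ 0 = 1 := by
      simp only [hφ, hG, zero_smul]
      rw [intervalIntegral.integral_same, add_zero, Complex.exp_neg, Complex.exp_log (hne 0),
        inv_mul_cancel₀ (hne 0)]
    rw [h0] at hconst
    have := hconst
    simp only [hφ, one_smul] at this
    have hexp := Complex.exp_ne_zero (-(G 1))
    rw [Complex.exp_neg] at this
    field_simp at this
    exact this.symm

/-- Every continuous nonvanishing function on ℂ has a continuous logarithm. -/
lemma continuous_log_exists (f : ℂ → ℂ) (hf : Continuous f) (hne : ∀ z, f z ≠ 0) :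
    ∃ g : ℂ → ℂ, Continuous g ∧ ∀ z, Complex.exp (g z) = f z := by
  obtain ⟨h, hh⟩ := exists_contMDiffMap_forall_mem_convex_of_local_const (𝓘(ℝ, ℂ)) (n := ⊤)
    (t := fun z => Metric.ball (f z) (‖f z‖ / 2)) (fun z => convex_ball _ _)
    (fun x => by
      refine ⟨f x, ?_⟩
      have hc : Continuous fun y => ‖f y‖ / 2 - dist (f x) (f y) := by
        exact ((hf.norm.div_const 2).sub ((continuous_const.dist hf)))
      have hpos : (0:ℝ) < ‖f x‖ / 2 - dist (f x) (f x) := by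
        simp only [dist_self, sub_zero]
        have := norm_pos_iff.mpr (hne x)
        linarith
      have hev : ∀ᶠ y in 𝓝 x, 0 < ‖f y‖ / 2 - dist (f x) (f y) :=
        continuousAt_const.eventually_lt hc.continuousAt hpos
      exact hev.mono fun y hy => by
        rw [Metric.mem_ball]
        linarith)
  have hdist : ∀ z, ‖h z - f z‖ < ‖f z‖ / 2 := fun z => by
    have := hh z
    rw [Metric.mem_ball, dist_eq_norm] at this
    exact this
  have hhc : ContDiff ℝ 1 ⇑h := (contMDiff_iff_contDiff.mp h.contMDiff).of_le (by exact_mod_cast le_top)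
  have hhne : ∀ z, h z ≠ 0 := by
    intro z hz
    have := hdist z
    rw [hz, zero_sub, norm_neg] at this
    have := norm_pos_iff.mpr (hne z)
    linarith
  have hlth : ∀ z, ‖f z - h z‖ < ‖h z‖ := by
    intro z
    have h1 := hdist z
    have h2 : ‖f z‖ - ‖h z - f z‖ ≤ ‖h z‖ := by
      have := norm_sub_norm_le (h z) (f z)
      have h4 := norm_sub_rev (h z) (f z)
      calc ‖f z‖ - ‖h z - f z‖ ≤ ‖f z‖ - (‖f z‖ - ‖h z‖) := by
            have := abs_norm_sub_norm_le (f z) (h z)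
            have := le_abs_self (‖f z‖ - ‖h z‖)
            rw [norm_sub_rev (h z) (f z)]
            linarith
        _ = ‖h z‖ := by ring
    rw [norm_sub_rev]
    linarith
  have hslit : ∀ z, f z / h z ∈ Complex.slitPlane := by
    intro z
    have key : ‖f z / h z - 1‖ < 1 := by
      have hz := hhne z
      rw [show f z / h z - 1 = (f z - h z) / h z by field_simp, norm_div]
      rw [div_lt_one (norm_pos_iff.mpr hz)]
      exact hlth z
    rw [Complex.mem_slitPlane_iff]
    left
    have h1 : |(f z / h z - 1).re| ≤ ‖f z / h z - 1‖ := Complex.abs_re_le_norm _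
    have h2 : (f z / h z - 1).re = (f z / h z).re - 1 := by simp
    have h3 := abs_lt.mp (h1.trans_lt key)
    linarith [h3.1]
  obtain ⟨g₀, hg₀c, hg₀⟩ := smooth_log_exists h hhc hhne
  refine ⟨fun z => g₀ z + Complex.log (f z / h z), ?_, ?_⟩
  · apply hg₀c.add
    rw [continuous_iff_continuousAt]
    intro z
    have h1 : ContinuousAt (fun z => f z / h z) z :=
      (hf.div h.contMDiff.continuous hhne).continuousAt
    exact h1.clog (hslit z)
  · intro z
    rw [Complex.exp_add, hg₀ z, Complex.exp_log (div_ne_zero (hne z) (hhne z))]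
    rw [mul_comm]
    exact div_mul_cancel₀ _ (hhne z)

lemma int_subsingleton {S : Set ℝ} (hS : IsPreconnected S)
    (hsub : S ⊆ Set.range ((↑) : ℤ → ℝ)) : S.Subsingleton := by
  intro a ha b hb
  by_contra hne
  wlog hab : a < b generalizing a b
  · exact this hb ha (Ne.symm hne) (lt_of_le_of_ne (not_lt.mp hab) (Ne.symm hne))
  obtain ⟨m, hm⟩ := hsub ha
  obtain ⟨m', hm'⟩ := hsub hb
  have hmm : m < m' := by exact_mod_cast hm ▸ hm' ▸ hab
  have hle : a + 1/2 ≤ b := by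
    have : (m:ℝ) + 1 ≤ m' := by exact_mod_cast hmm
    rw [← hm, ← hm']; linarith
  have hmem : a + 1/2 ∈ S := hS.Icc_subset ha hb ⟨by linarith, hle⟩
  obtain ⟨k, hk⟩ := hsub hmem
  have : ((2*(k - m) : ℤ) : ℝ) = 1 := by push_cast; rw [← hm] at hk; linarith
  have : (2*(k - m) : ℤ) = 1 := by exact_mod_cast this
  omega

/-- Unicoherence-style argument for the plane. -/
lemma eilenberg (C D A B : Set ℂ) (hC : IsClosed C) (hD : IsClosed D)
    (hCp : IsPreconnected C) (hDp : IsPreconnected D) (hU : C ∪ D = univ)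
    (hCD : C ∩ D = A ∪ B) (hA : IsClosed A) (hB : IsClosed B) (hAB : Disjoint A B)
    (hAne : A.Nonempty) (hBne : B.Nonempty) : False := by
  classical
  obtain ⟨u, hu0, hu1, _⟩ := exists_continuous_zero_one_of_isClosed hA hB hAB
  set E : ℂ → ℂ := fun z => Complex.exp (2 * Real.pi * Complex.I * (u z)) with hE
  have hEc : Continuous E := Complex.continuous_exp.comp
    (continuous_const.mul (Complex.continuous_ofReal.comp u.continuous))
  have hfrsub : C ∩ D ⊆ A ∪ B := hCD.subset
  have hone : ∀ z ∈ C ∩ D, E z = 1 := by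
    intro z hz
    rcases hfrsub hz with h | h
    · simp [hE, hu0 h]
    · have h1 : u z = 1 := hu1 h
      simp only [hE, h1, Complex.ofReal_one, mul_one]
      exact Complex.exp_two_pi_mul_I
  set f : ℂ → ℂ := C.piecewise E (fun _ => 1) with hf
  have hfr : ∀ z ∈ frontier C, E z = (fun _ => (1:ℂ)) z := by
    intro z hz
    apply hone
    refine ⟨hC.frontier_subset hz, ?_⟩
    have h1 : frontier C ⊆ closure Cᶜ := by
      rw [frontier_eq_closure_inter_closure]; exact inter_subset_right
    have h2 : Cᶜ ⊆ D := fun x hx => by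
      have := mem_univ x
      rw [← hU] at this
      exact this.resolve_left hx
    exact hD.closure_subset_iff.mpr h2 (h1 hz)
  have hfc : Continuous f := Continuous.piecewise hfr hEc continuous_const
  have hfne : ∀ z, f z ≠ 0 := by
    intro z
    by_cases hz : z ∈ C
    · simp only [hf, piecewise_eq_of_mem _ _ _ hz]
      exact Complex.exp_ne_zero _
    · simp [hf, piecewise_eq_of_notMem _ _ _ hz]
  obtain ⟨g, hgc, hg⟩ := continuous_log_exists f hfc hfne
  -- On C : (g z).im / (2π) - u z is an integer
  have hπ : (Real.pi:ℝ) ≠ 0 := Real.pi_ne_zero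
  have hCint : ∀ z ∈ C, ∃ n : ℤ, (g z).im / (2 * Real.pi) - u z = n := by
    intro z hz
    have h1 : Complex.exp (g z - 2 * Real.pi * Complex.I * (u z)) = 1 := by
      rw [Complex.exp_sub, hg z, hf, piecewise_eq_of_mem _ _ _ hz, hE]
      exact div_self (Complex.exp_ne_zero _)
    obtain ⟨n, hn⟩ := Complex.exp_eq_one_iff.mp h1
    refine ⟨n, ?_⟩
    have him : (g z).im - 2 * Real.pi * u z = n * (2 * Real.pi) := by
      simpa using congrArg Complex.im hn
    have h2π : (2:ℝ) * Real.pi ≠ 0 := by positivity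
    field_simp
    linarith
  have hDint : ∀ z ∈ D, ∃ n : ℤ, (g z).im / (2 * Real.pi) = n := by
    intro z hz
    have h1 : Complex.exp (g z) = 1 := by
      rw [hg z, hf]
      by_cases hzC : z ∈ C
      · rw [piecewise_eq_of_mem _ _ _ hzC]
        exact hone z ⟨hzC, hz⟩
      · rw [piecewise_eq_of_notMem _ _ _ hzC]
    obtain ⟨n, hn⟩ := Complex.exp_eq_one_iff.mp h1
    refine ⟨n, ?_⟩
    have him : (g z).im = n * (2 * Real.pi) := by
      simpa using congrArg Complex.im hn
    have h2π : (2:ℝ) * Real.pi ≠ 0 := by positivity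
    field_simp
    linarith
  obtain ⟨a, ha⟩ := hAne
  obtain ⟨b, hb⟩ := hBne
  have haCD : a ∈ C ∩ D := by rw [hCD]; exact Or.inl ha
  have hbCD : b ∈ C ∩ D := by rw [hCD]; exact Or.inr hb
  -- constancy on C
  have hqCc : Continuous fun z => (g z).im / (2 * Real.pi) - u z :=
    (((Complex.continuous_im.comp hgc).div_const _).sub u.continuous)
  have hqDc : Continuous fun z => (g z).im / (2 * Real.pi) :=
    ((Complex.continuous_im.comp hgc).div_const _)
  have hCsub : IsPreconnected ((fun z => (g z).im / (2 * Real.pi) - u z) '' C) :=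
    hCp.image _ hqCc.continuousOn
  have hCconst := int_subsingleton hCsub (by
    rintro x ⟨z, hz, rfl⟩
    obtain ⟨n, hn⟩ := hCint z hz
    exact ⟨n, hn.symm⟩)
  have hDsub' : IsPreconnected ((fun z => (g z).im / (2 * Real.pi)) '' D) :=
    hDp.image _ hqDc.continuousOn
  have hDconst := int_subsingleton hDsub' (by
    rintro x ⟨z, hz, rfl⟩
    obtain ⟨n, hn⟩ := hDint z hz
    exact ⟨n, hn.symm⟩)
  have e1 : (g a).im / (2 * Real.pi) - u a = (g b).im / (2 * Real.pi) - u b :=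
    hCconst ⟨a, haCD.1, rfl⟩ ⟨b, hbCD.1, rfl⟩
  have e2 : (g a).im / (2 * Real.pi) = (g b).im / (2 * Real.pi) :=
    hDconst ⟨a, haCD.2, rfl⟩ ⟨b, hbCD.2, rfl⟩
  rw [hu0 ha, hu1 hb] at e1
  simp at e1
  linarith [e1, e2]

theorem frontier_of_complement_component_connected (K : Set ℂ)
    (hK : IsClosed K) (hKconn : IsConnected K)
    (v : ℂ) (hv : v ∉ K) (V : Set ℂ)
    (hV : V = connectedComponentIn Kᶜ v) :
    IsConnected (frontier V) := by
  have hKc : IsOpen Kᶜ := hK.isOpen_compl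
  have hVopen : IsOpen V := hV ▸ hKc.connectedComponentIn
  have hvV : v ∈ V := hV ▸ mem_connectedComponentIn hv
  have hVconn : IsPreconnected V := hV ▸ isPreconnected_connectedComponentIn
  have hVK : V ⊆ Kᶜ := hV ▸ connectedComponentIn_subset _ _
  -- closure of a component minus itself lies in K
  have hfrK : ∀ x : ℂ, closure (connectedComponentIn Kᶜ x) \ connectedComponentIn Kᶜ x ⊆ K := by
    intro x y hy
    by_contra hyK
    have hyW : y ∈ connectedComponentIn Kᶜ y := mem_connectedComponentIn hyK
    have hopen : IsOpen (connectedComponentIn Kᶜ y) := hKc.connectedComponentIn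
    obtain ⟨z, hz1, hz2⟩ := mem_closure_iff.mp hy.1 _ hopen hyW
    have heq : connectedComponentIn Kᶜ y = connectedComponentIn Kᶜ x := by
      rw [connectedComponentIn_eq hz1]
      exact (connectedComponentIn_eq hz2).symm
    exact hy.2 (heq ▸ hyW)
  -- each set (closure of component) ∪ K is preconnected and inside Vᶜ when x ∈ Vᶜ
  have hS : ∀ x : ℂ, IsPreconnected (closure (connectedComponentIn Kᶜ x) ∪ K) := by
    intro x
    by_cases hx : x ∈ Kᶜ
    · set W := connectedComponentIn Kᶜ x with hW
      have hWp : IsPreconnected W := isPreconnected_connectedComponentIn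
      have hWne : W.Nonempty := ⟨x, mem_connectedComponentIn hx⟩
      have hne : (closure W ∩ K).Nonempty := by
        rcases eq_or_ne (closure W) W with h | h
        · exfalso
          have hclopen : IsClopen W := ⟨h ▸ isClosed_closure, hKc.connectedComponentIn⟩
          rcases isClopen_iff.mp hclopen with h0 | h0
          · exact hWne.ne_empty h0
          · obtain ⟨k, hk⟩ := hKconn.nonempty
            have : k ∈ W := h0 ▸ mem_univ k
            exact (connectedComponentIn_subset Kᶜ x this) hk
        · obtain ⟨y, hy1, hy2⟩ := exists_of_ssubset
            (ssubset_of_ne_of_subset (Ne.symm h) subset_closure)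
          exact ⟨y, hy1, hfrK x ⟨hy1, hy2⟩⟩
      obtain ⟨y, hy⟩ := hne
      exact IsPreconnected.union y hy.1 hy.2 hWp.closure hKconn.isPreconnected
    · rw [connectedComponentIn_eq_empty hx]
      simp only [closure_empty, empty_union]
      exact hKconn.isPreconnected
  have hdisj : ∀ x : ℂ, x ∉ V → Disjoint (connectedComponentIn Kᶜ x) V := by
    intro x hxV
    by_cases hxK : x ∈ Kᶜ
    swap
    · rw [connectedComponentIn_eq_empty hxK]; exact disjoint_bot_left
    by_contra hd
    obtain ⟨z, hz1, hz2⟩ := not_disjoint_iff.mp hd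
    have := connectedComponentIn_eq hz1
    rw [hV] at hz2
    have h2 := connectedComponentIn_eq hz2
    exact hxV (by
      rw [hV, h2, ← this]
      exact mem_connectedComponentIn hxK)
  have hsub : ∀ x : ℂ, x ∉ V → closure (connectedComponentIn Kᶜ x) ∪ K ⊆ Vᶜ := by
    intro x hxV y hy
    rcases hy with hy | hy
    · by_cases h : y ∈ connectedComponentIn Kᶜ x
      · exact fun hyV => (hdisj x hxV).le_bot ⟨h, hyV⟩
      · exact fun hyV => (hVK hyV) (hfrK x ⟨hy, h⟩)
    · exact fun hyV => (hVK hyV) hy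
  obtain ⟨k₀, hk₀⟩ := hKconn.nonempty
  have hVcp : IsPreconnected Vᶜ := by
    have heq : Vᶜ = ⋃ x : ↥(Vᶜ), (closure (connectedComponentIn Kᶜ (x:ℂ)) ∪ K) := by
      apply Subset.antisymm
      · intro x hx
        refine mem_iUnion.mpr ⟨⟨x, hx⟩, ?_⟩
        by_cases hxK : x ∈ Kᶜ
        · exact Or.inl (subset_closure (mem_connectedComponentIn hxK))
        · exact Or.inr (not_not.mp hxK)
      · intro y hy
        obtain ⟨x, hyx⟩ := mem_iUnion.mp hy
        exact hsub x x.2 hyx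
    rw [heq]
    exact isPreconnected_iUnion ⟨k₀, mem_iInter.2 fun x => Or.inr hk₀⟩ fun x => hS x
  -- frontier V = closure V ∩ Vᶜ
  have hfr : frontier V = closure V ∩ Vᶜ := by
    rw [frontier, hVopen.interior_eq]
    rfl
  have hCU : closure V ∪ Vᶜ = univ := by
    apply eq_univ_of_forall
    intro x
    by_cases h : x ∈ V
    · exact Or.inl (subset_closure h)
    · exact Or.inr h
  -- nonempty
  have hfrne : (frontier V).Nonempty := by
    rcases (frontier V).eq_empty_or_nonempty with h | h
    · exfalso
      have hclopen : IsClopen V := isClopen_iff_frontier_eq_empty.mpr h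
      rcases isClopen_iff.mp hclopen with h0 | h0
      · exact (h0 ▸ hvV : v ∈ (∅ : Set ℂ))
      · exact (hVK (h0 ▸ mem_univ k₀)) hk₀
    · exact h
  refine ⟨hfrne, ?_⟩
  by_contra hnot
  rw [isPreconnected_iff_subset_of_fully_disjoint_closed isClosed_frontier] at hnot
  push_neg at hnot
  obtain ⟨u, w, hu, hw, hcov, hduw, hnu, hnw⟩ := hnot
  set A := frontier V ∩ u with hA
  set B := frontier V ∩ w with hB
  have hABfr : frontier V = A ∪ B := by
    apply Subset.antisymm
    · intro x hx
      rcases hcov hx with h | h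
      · exact Or.inl ⟨hx, h⟩
      · exact Or.inr ⟨hx, h⟩
    · exact union_subset inter_subset_left inter_subset_left
  have hAne : A.Nonempty := by
    obtain ⟨x, hx1, hx2⟩ := not_subset.mp hnw
    rcases hcov hx1 with h | h
    · exact ⟨x, hx1, h⟩
    · exact absurd h hx2
  have hBne : B.Nonempty := by
    obtain ⟨x, hx1, hx2⟩ := not_subset.mp hnu
    rcases hcov hx1 with h | h
    · exact absurd h hx2
    · exact ⟨x, hx1, h⟩
  exact eilenberg (closure V) Vᶜ A B isClosed_closure hVopen.isClosed_compl
    hVconn.closure hVcp hCU (hfr.symm ▸ hABfr)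
    (isClosed_frontier.inter hu) (isClosed_frontier.inter hw)
    (hduw.mono inter_subset_right inter_subset_right) hAne hBne
end
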